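/- arXiv:1809.03386 — 3 statements merged into one kernel-verified Lean document; each statement's English description precedes it below -/
import Mathlib

section
/- Let (V,m',d) be a resolution of the A∞-algebra (W,m_W), with the associated bigraded DGLA L̄ = tL with differential ∂ = [m'+d,−]. Then the cohomology of L̄ with respect to ∂'' = [d,−] is concentrated in resolution degree zero: H^q_{∂''}(L̄) = 0 for q > 0, and H⁰_{∂''}(L̄) = ker ∂'' ∩ L̄^{•,0}. -/
/-- The sign `(-1)^n` for an integer `n`. -/
def ksign (n : ℤ) : ℤ := if Even n then 1 else -1

/-- A model of `Hom(T(V),V)` for a graded vector space `V` with homogeneous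
basis `S`: a family of multilinear maps, recorded by their values on basis
tuples (of every arity `n`). -/
abbrev HomT (k S : Type) [Field k] : Type := (n : ℕ) → (ℕ → S) → (S →₀ k)

/-- The Gerstenhaber composition `f ∘ g`:
`(f ∘ g)(v₁ ⊗ ⋯ ⊗ v_{m+n-1}) = ∑ᵢ (-1)^{|g|(|v₁|+⋯+|vᵢ|)} f(v₁ ⊗ ⋯ ⊗ vᵢ ⊗ g(v_{i+1} ⊗ ⋯ ⊗ v_{i+m}) ⊗ ⋯)`,
where `dg = |g|` is the degree of `g`. -/
noncomputable def circ {k S : Type} [Field k] (deg : S → ℤ) (dg : ℤ)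
    (f g : HomT k S) : HomT k S :=
  fun N v =>
    ∑ m ∈ Finset.range (N + 1), ∑ i ∈ Finset.range (N - m + 1),
      ksign (dg * ∑ j ∈ Finset.range i, deg (v j)) •
        (g m (fun j => v (i + j))).sum
          (fun s c => c • f (N - m + 1)
            (fun j => if j < i then v j else if j = i then s else v (j + m - 1)))

/-- The Gerstenhaber bracket `[f,g] = f ∘ g - (-1)^{|f||g|} g ∘ f` of homogeneous
maps `f`, `g` of degrees `df`, `dg`. -/
noncomputable def gbracket {k S : Type} [Field k] (deg : S → ℤ) (df dg : ℤ)
    (f g : HomT k S) : HomT k S :=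
  circ deg dg f g - ksign (df * dg) • circ deg df g f

/-- `f` is homogeneous of degree `d` as an element of `Hom(T(V),V)`. -/
def IsHomog {k S : Type} [Field k] (deg : S → ℤ) (f : HomT k S) (d : ℤ) : Prop :=
  ∀ n v s, (f n v) s ≠ 0 → deg s = (∑ j ∈ Finset.range n, deg (v j)) + d


/-- Linear extension of a map `S → (S →₀ k)` defined on a basis `S`. -/
noncomputable def lext {k S : Type} [Field k] (φ : S → (S →₀ k)) (x : S →₀ k) : S →₀ k :=
  x.sum fun s c => c • φ s

/-- A linear map `V → V` (given on the basis) viewed as an arity-1 element of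
`Hom(T(V),V)`. -/
noncomputable def arity1 {k S : Type} [Field k] (db : S → (S →₀ k)) : HomT k S :=
  fun n v => if n = 1 then db (v 0) else 0

/-!
A cocycle `F` of `∂'' = [d,-]` satisfies `d ∘ F = ± F ∘ d`, so for `G = h ∘ F` the bracket
`[d, G] = d h F ∓ h F d` collapses to `(dh + hd) F = F - ipF`. In positive resolution degree
the values of `F` lie in `V^{•,>0}`, where `ip` vanishes, so `F = [d, hF]`. Conversely `[d, G]`
raises the resolution degree of `G ∈ L̄^{•,q}` to `q + 1 > 0`, so it never lands in `L̄^{•,0}`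
unless it is zero.
-/

lemma ksign_mul_self (a : ℤ) : ksign a * ksign a = 1 := by
  unfold ksign; split <;> ring

lemma ksign_sub_one_mul (a : ℤ) : ksign (a - 1) * ksign a = -1 := by
  simp only [ksign, Int.even_sub_one]
  by_cases h : Even a <;> simp [h]

section

variable {k S : Type} [Field k]

lemma lext_eq_linearCombination (φ : S → S →₀ k) :
    lext φ = ⇑(Finsupp.linearCombination k φ) := by
  funext x; rw [lext, Finsupp.linearCombination_apply]

lemma exists_of_lext_apply_ne_zero {φ : S → S →₀ k} {x : S →₀ k} {t : S}
    (hne : lext φ x t ≠ 0) : ∃ s, x s ≠ 0 ∧ φ s t ≠ 0 := by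
  rw [lext, Finsupp.sum, Finset.sum_apply'] at hne
  obtain ⟨s, hs, hne⟩ := Finset.exists_ne_zero_of_sum_ne_zero hne
  exact ⟨s, Finsupp.mem_support_iff.mp hs, fun h0 => hne (by simp [h0])⟩

noncomputable def postcomp (φ : S → S →₀ k) (g : HomT k S) : HomT k S :=
  fun n v => lext φ (g n v)

noncomputable def precomp (deg : S → ℤ) (db : S → S →₀ k) (g : HomT k S) : HomT k S :=
  fun N v => ∑ i ∈ Finset.range N, ksign (∑ j ∈ Finset.range i, deg (v j)) •
    (db (v i)).sum
      (fun s c => c • g N (fun j => if j < i then v j else if j = i then s else v j))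

@[simp]
lemma postcomp_zero (φ : S → S →₀ k) : postcomp φ (0 : HomT k S) = 0 := by
  funext n v; exact map_zero (Finsupp.linearCombination k φ)

lemma postcomp_zsmul (φ : S → S →₀ k) (c : ℤ) (g : HomT k S) :
    postcomp φ (c • g) = c • postcomp φ g := by
  funext n v; simp only [postcomp, lext_eq_linearCombination, Pi.smul_apply, map_zsmul]

lemma precomp_postcomp (deg : S → ℤ) (db φ : S → S →₀ k) (g : HomT k S) :
    precomp deg db (postcomp φ g) = postcomp φ (precomp deg db g) := by
  funext N v
  simp only [precomp, postcomp, lext_eq_linearCombination, Finsupp.sum, map_sum, map_zsmul,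
    map_smul]

lemma circ_arity1_left (deg : S → ℤ) (dg : ℤ) (db : S → S →₀ k) (g : HomT k S) :
    circ deg dg (arity1 db) g = postcomp db g := by
  funext N v
  unfold circ
  rw [Finset.sum_eq_single_of_mem N (Finset.self_mem_range_succ N)]
  · simp [arity1, ksign, lext, postcomp]
  · intro m hm _
    have hm : m < N + 1 := Finset.mem_range.mp hm
    refine Finset.sum_eq_zero fun i _ => ?_
    simp [arity1, show N - m ≠ 0 by omega]

lemma circ_arity1_right (deg : S → ℤ) (db : S → S →₀ k) (g : HomT k S) :
    circ deg 1 g (arity1 db) = precomp deg db g := by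
  funext N v
  unfold circ precomp
  rcases Nat.eq_zero_or_pos N with rfl | hN
  · simp [arity1]
  · rw [Finset.sum_eq_single_of_mem 1 (Finset.mem_range.mpr (by omega))]
    · simp only [Nat.sub_add_cancel hN, one_mul]
      exact Finset.sum_congr rfl fun i _ => by simp [arity1]
    · intro m _ hm
      exact Finset.sum_eq_zero fun i _ => by simp [arity1, hm]

lemma gbracket_arity1 (deg : S → ℤ) (dg : ℤ) (db : S → S →₀ k) (g : HomT k S) :
    gbracket deg 1 dg (arity1 db) g = postcomp db g - ksign dg • precomp deg db g := by
  rw [gbracket, circ_arity1_left, circ_arity1_right, one_mul]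

lemma gbracket_arity1_postcomp_of_eq_zero {deg : S → ℤ} {dg : ℤ} {db : S → S →₀ k}
    {g : HomT k S} (hg : gbracket deg 1 dg (arity1 db) g = 0) (φ : S → S →₀ k) :
    gbracket deg 1 (dg - 1) (arity1 db) (postcomp φ g)
      = postcomp db (postcomp φ g) + postcomp φ (postcomp db g) := by
  have hpre : precomp deg db g = ksign dg • postcomp db g := by
    rw [gbracket_arity1, sub_eq_zero] at hg
    rw [hg, smul_smul, ksign_mul_self, one_smul]
  rw [gbracket_arity1, precomp_postcomp, hpre, postcomp_zsmul, smul_smul, ksign_sub_one_mul,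
    neg_one_smul, sub_neg_eq_add]

lemma sum_range_update {f : S → ℤ} {v : ℕ → S} {i N : ℕ} (hiN : i < N) (s : S) :
    ∑ j ∈ Finset.range N, f (if j < i then v j else if j = i then s else v j)
      = ∑ j ∈ Finset.range N, f (v j) + (f s - f (v i)) := by
  have key : ∀ j, f (if j < i then v j else if j = i then s else v j)
      = f (v j) + if j = i then f s - f (v i) else 0 := by
    intro j
    rcases lt_trichotomy j i with hj | rfl | hj
    · simp [hj, hj.ne]
    · simp
    · simp [hj.ne', not_lt.mpr hj.le]
  simp [key, Finset.sum_add_distrib, Finset.mem_range.mpr hiN]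

namespace IsHomog

variable {r : S → ℤ} {g f : HomT k S} {q a : ℤ}

lemma postcomp {φ : S → S →₀ k} (hφ : ∀ s t, φ s t ≠ 0 → r t = r s + a)
    (hg : IsHomog r g q) : IsHomog r (postcomp φ g) (q + a) := by
  intro N v t hne
  obtain ⟨s, hgs, hφs⟩ := exists_of_lext_apply_ne_zero hne
  rw [hφ s t hφs, hg N v s hgs, add_assoc]

lemma precomp (deg : S → ℤ) {db : S → S →₀ k} (hdb : ∀ s t, db s t ≠ 0 → r t = r s + a)
    (hg : IsHomog r g q) : IsHomog r (precomp deg db g) (q + a) := by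
  intro N v t hne
  rw [_root_.precomp, Finset.sum_apply'] at hne
  obtain ⟨i, hi, hne⟩ := Finset.exists_ne_zero_of_sum_ne_zero hne
  rw [Finsupp.smul_apply, Finsupp.sum, Finset.sum_apply'] at hne
  obtain ⟨s, hs, hne⟩ := Finset.exists_ne_zero_of_sum_ne_zero (right_ne_zero_of_smul hne)
  have hiN := Finset.mem_range.mp hi
  have hgs := hg N _ t (right_ne_zero_of_smul hne)
  rw [sum_range_update hiN, hdb (v i) s (Finsupp.mem_support_iff.mp hs)] at hgs
  rw [hgs]; ring

lemma sub (hf : IsHomog r f q) (hg : IsHomog r g q) : IsHomog r (f - g) q := by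
  intro N v t hne
  by_cases hft : f N v t = 0
  · exact hg N v t fun hgt => hne (by simp [hft, hgt])
  · exact hf N v t hft

lemma zsmul (c : ℤ) (hg : IsHomog r g q) : IsHomog r (c • g) q :=
  fun N v t hne => hg N v t fun h0 => hne (by simp [h0])

lemma eq_zero_of_ne (hq : IsHomog r f q) (ha : IsHomog r f a) (hne : q ≠ a) : f = 0 := by
  funext N v; ext t
  by_contra h
  exact hne (by linarith [hq N v t h, ha N v t h])

end IsHomog

lemma postcomp_eq_zero_of_isHomog {r : S → ℤ} {φ : S → S →₀ k} {g : HomT k S} {q : ℤ}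
    (hr : ∀ s, 0 ≤ r s) (hφ : ∀ s t, φ s t ≠ 0 → r s = 0) (hg : IsHomog r g q) (hq : 0 < q) :
    postcomp φ g = 0 := by
  funext N v; ext t
  by_contra hne
  obtain ⟨s, hgs, hφs⟩ := exists_of_lext_apply_ne_zero hne
  have hsum : 0 ≤ ∑ j ∈ Finset.range N, r (v j) := Finset.sum_nonneg fun j _ => hr (v j)
  linarith [hg N v s hgs, hφ s t hφs]

end

theorem resolution_cohomology_concentrated_in_degree_zero_general {k S : Type} [Field k]
    (deg rdeg : S → ℤ) (hr0 : ∀ s, 0 ≤ rdeg s)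
    (db h ipb : S → (S →₀ k))
    (hdb : ∀ s t, (db s) t ≠ 0 → deg t = deg s ∧ rdeg t = rdeg s + 1)
    (hhb : ∀ s t, (h s) t ≠ 0 → deg t = deg s ∧ rdeg t = rdeg s - 1)
    (hip : ∀ s t, (ipb s) t ≠ 0 → rdeg s = 0 ∧ rdeg t = 0 ∧ deg t = deg s)
    (hsdr : ∀ x, lext h (lext db x) + lext db (lext h x) = x - lext ipb x) :
    (∀ (q dF : ℤ), 0 < q →
      ∀ F : ℕ → HomT k S, F 0 = 0 →
        (∀ n, IsHomog (fun s => deg s + rdeg s) (F n) dF) →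
        (∀ n, IsHomog rdeg (F n) q) →
        (∀ n, gbracket (fun s => deg s + rdeg s) 1 dF (arity1 db) (F n) = 0) →
        ∃ G : ℕ → HomT k S, G 0 = 0
          ∧ (∀ n, IsHomog (fun s => deg s + rdeg s) (G n) (dF - 1))
          ∧ (∀ n, IsHomog rdeg (G n) (q - 1))
          ∧ ∀ n, gbracket (fun s => deg s + rdeg s) 1 (dF - 1) (arity1 db) (G n) = F n)
    ∧ (∀ (q dG : ℤ) (F G : ℕ → HomT k S), 0 ≤ q → F 0 = 0 → G 0 = 0 →
        (∀ n, IsHomog rdeg (F n) 0) →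
        (∀ n, IsHomog rdeg (G n) q) →
        (∀ n, IsHomog (fun s => deg s + rdeg s) (G n) dG) →
        (∀ n, gbracket (fun s => deg s + rdeg s) 1 dG (arity1 db) (G n) = F n) →
        F = 0) := by
  have hd_rdeg : ∀ s t, db s t ≠ 0 → rdeg t = rdeg s + 1 := fun s t hst => (hdb s t hst).2
  have hh_rdeg : ∀ s t, h s t ≠ 0 → rdeg t = rdeg s + -1 := fun s t hst => by
    rw [(hhb s t hst).2, sub_eq_add_neg]
  have hh_tot : ∀ s t, h s t ≠ 0 → deg t + rdeg t = (deg s + rdeg s) + -1 := fun s t hst => by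
    rw [(hhb s t hst).1, (hhb s t hst).2]; ring
  constructor
  · intro q dF hq F hF0 hF_tot hF_rdeg hF_closed
    refine ⟨fun n => postcomp h (F n), by simp [hF0], fun n => ?_, fun n => ?_, fun n => ?_⟩
    · simpa only [sub_eq_add_neg] using (hF_tot n).postcomp hh_tot
    · simpa only [sub_eq_add_neg] using (hF_rdeg n).postcomp hh_rdeg
    · have hW : postcomp ipb (F n) = 0 :=
        postcomp_eq_zero_of_isHomog hr0 (fun s t hst => (hip s t hst).1) (hF_rdeg n) hq
      rw [gbracket_arity1_postcomp_of_eq_zero (hF_closed n)]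
      funext N v
      change lext db (lext h _) + lext h (lext db _) = _
      rw [add_comm, hsdr, show lext ipb (F n N v) = 0 from congrFun (congrFun hW N) v, sub_zero]
  · intro q dG F G hq _ _ hF_rdeg hG_rdeg _ hFG
    funext n
    have hF_rdeg_succ : IsHomog rdeg (F n) (q + 1) := by
      rw [← hFG n, gbracket_arity1]
      exact ((hG_rdeg n).postcomp hd_rdeg).sub (((hG_rdeg n).precomp _ hd_rdeg).zsmul _)
    exact (hF_rdeg n).eq_zero_of_ne hF_rdeg_succ (by omega)

/-- Let `(V, m', d)` be a resolution of an A∞-algebra, i.e. `V` is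
a bigraded space (basis degrees `deg`, resolution degrees `rdeg ≥ 0`), `d` has
bidegree `(0,1)` and admits a contracting homotopy `h` onto `W = H⁰(V,d)`
(`hd + dh = 1 − ip`).  Then the cohomology of the ideal `L̄ = tL` (elements of
`Hom(T(V),V) ⊗ t k[[t]]`, encoded as power series `F : ℕ → HomT` with `F 0 = 0`)
with respect to `∂'' = [d,−]` is concentrated in resolution degree zero: every
`∂''`-closed element of resolution degree `q > 0` is a `∂''`-coboundary of an
element of resolution degree `q - 1`, and no nonzero element of resolution degree
`0` is a `∂''`-coboundary of an element of `L̄` (of resolution degree `≥ 0`), so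
that `H⁰_{∂''}(L̄) = ker ∂'' ∩ L̄^{•,0}`. -/
theorem resolution_cohomology_concentrated_in_degree_zero {k S : Type} [Field k]
    (deg rdeg : S → ℤ) (hr0 : ∀ s, 0 ≤ rdeg s)
    (db h ipb : S → (S →₀ k))
    (hdb : ∀ s t, (db s) t ≠ 0 → deg t = deg s ∧ rdeg t = rdeg s + 1)
    (hhb : ∀ s t, (h s) t ≠ 0 → deg t = deg s ∧ rdeg t = rdeg s - 1)
    (hip : ∀ s t, (ipb s) t ≠ 0 → rdeg s = 0 ∧ rdeg t = 0 ∧ deg t = deg s)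
    (hd2 : ∀ x, lext db (lext db x) = 0)
    (hsdr : ∀ x, lext h (lext db x) + lext db (lext h x) = x - lext ipb x)
    (hh2 : ∀ x, lext h (lext h x) = 0) :
    (∀ (q dF : ℤ), 0 < q →
      ∀ F : ℕ → HomT k S, F 0 = 0 →
        (∀ n, IsHomog (fun s => deg s + rdeg s) (F n) dF) →
        (∀ n, IsHomog rdeg (F n) q) →
        (∀ n, gbracket (fun s => deg s + rdeg s) 1 dF (arity1 db) (F n) = 0) →
        ∃ G : ℕ → HomT k S, G 0 = 0
          ∧ (∀ n, IsHomog (fun s => deg s + rdeg s) (G n) (dF - 1))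
          ∧ (∀ n, IsHomog rdeg (G n) (q - 1))
          ∧ ∀ n, gbracket (fun s => deg s + rdeg s) 1 (dF - 1) (arity1 db) (G n) = F n)
    ∧ (∀ (q dG : ℤ) (F G : ℕ → HomT k S), 0 ≤ q → F 0 = 0 → G 0 = 0 →
        (∀ n, IsHomog rdeg (F n) 0) →
        (∀ n, IsHomog rdeg (G n) q) →
        (∀ n, IsHomog (fun s => deg s + rdeg s) (G n) dG) →
        (∀ n, gbracket (fun s => deg s + rdeg s) 1 dG (arity1 db) (G n) = F n) →
        F = 0) :=
  resolution_cohomology_concentrated_in_degree_zero_general deg rdeg hr0 db h ipb hdb hhb hip hsdr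
end

section
/- Let ∂ be the differential of a DGLA, μ a degree-1 element, and suppose elements Γ (degree 0), Λ (degree 1) satisfy the master equations ∂_μΓ = tΛ − Nμ, NΛ = [Γ,Λ], with μ(0)=0, Λ(0)=λ, Γ ∈ tL, where ∂_μ = ∂+[μ,−] and N = t d/dt. If ∂λ = 0 and [λ,λ] = 0, then μ satisfies the Maurer-Cartan equation ∂μ + ½[μ,μ] = 0. -/
open Finset

@[simp] lemma ksign_zero : ksign 0 = 1 := by simp [ksign]

@[simp] lemma ksign_one : ksign 1 = -1 := by simp [ksign]

namespace SeriesDGLA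

section Operators

variable {M : Type*} [AddCommMonoid M]

def euler : (ℕ → M) →+ ℕ → M where
  toFun f n := n • f n
  map_zero' := by ext; simp
  map_add' f g := by ext; simp [smul_add]

def mulT : (ℕ → M) →+ ℕ → M where
  toFun f n := if n = 0 then 0 else f (n - 1)
  map_zero' := by ext; simp
  map_add' f g := by ext n; by_cases hn : n = 0 <;> simp [hn]

@[simp] lemma euler_apply (f : ℕ → M) (n : ℕ) : euler f n = n • f n := rfl

@[simp] lemma mulT_apply (f : ℕ → M) (n : ℕ) :
    mulT f n = if n = 0 then 0 else f (n - 1) := rfl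

lemma sum_antidiagonal_sum_antidiagonal_assoc (F : ℕ → ℕ → ℕ → M) (n : ℕ) :
    ∑ p ∈ antidiagonal n, ∑ q ∈ antidiagonal p.1, F q.1 q.2 p.2 =
      ∑ p ∈ antidiagonal n, ∑ q ∈ antidiagonal p.2, F p.1 q.1 q.2 := by
  simp only [sum_sigma']
  apply sum_nbij' (fun ⟨⟨_, c⟩, ⟨a, b⟩⟩ ↦ ⟨(a, b + c), (b, c)⟩)
    (fun ⟨⟨a, _⟩, ⟨b, c⟩⟩ ↦ ⟨(a + b, c), (a, b)⟩) <;> aesop (add simp [add_assoc])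

lemma eq_zero_of_forall_nsmul_eq_zero [IsAddTorsionFree M] {X : ℕ → M} (h0 : X 0 = 0)
    (h : ∀ n, (∀ j < n, X j = 0) → n • X n = 0) : X = 0 := by
  funext n
  induction n using Nat.strong_induction_on with
  | _ n ih =>
    rcases n with _ | n
    · exact h0
    · exact (nsmul_eq_zero_iff_right n.succ_ne_zero).mp (h _ ih)

end Operators

section Bracket

variable {k M : Type*} [CommRing k] [AddCommGroup M] [Module k M]

def GradedSkew (deg : ℤ → Submodule k M) (br : M →ₗ[k] M →ₗ[k] M) : Prop :=
  ∀ (i j : ℤ) (x y : M), x ∈ deg i → y ∈ deg j → br x y = -(ksign (i * j) • br y x)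

def GradedJacobi (deg : ℤ → Submodule k M) (br : M →ₗ[k] M →ₗ[k] M) : Prop :=
  ∀ (i j : ℤ) (x y z : M), x ∈ deg i → y ∈ deg j →
    br (br x y) z = br x (br y z) - ksign (i * j) • br y (br x z)

def GradedLeibniz (deg : ℤ → Submodule k M) (br : M →ₗ[k] M →ₗ[k] M) (D : M →ₗ[k] M) : Prop :=
  ∀ (i : ℤ) (x y : M), x ∈ deg i → D (br x y) = br (D x) y + ksign i • br x (D y)

def bracket (br : M →ₗ[k] M →ₗ[k] M) : (ℕ → M) →ₗ[k] (ℕ → M) →ₗ[k] ℕ → M :=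
  LinearMap.mk₂ k (fun f g n ↦ ∑ p ∈ antidiagonal n, br (f p.1) (g p.2))
    (fun _ _ _ ↦ by ext; simp [sum_add_distrib])
    (fun _ _ _ ↦ by ext; simp [smul_sum])
    (fun _ _ _ ↦ by ext; simp [sum_add_distrib])
    (fun _ _ _ ↦ by ext; simp [smul_sum])

variable {deg : ℤ → Submodule k M} {br : M →ₗ[k] M →ₗ[k] M}

lemma bracket_apply (f g : ℕ → M) (n : ℕ) :
    bracket br f g n = ∑ p ∈ antidiagonal n, br (f p.1) (g p.2) := rfl

lemma bracket_apply_eq_sum_range (f g : ℕ → M) (n : ℕ) :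
    bracket br f g n = ∑ i ∈ range (n + 1), br (f i) (g (n - i)) :=
  Nat.sum_antidiagonal_eq_sum_range_succ_mk _ n

@[simp] lemma bracket_apply_zero (f g : ℕ → M) : bracket br f g 0 = br (f 0) (g 0) := by
  simp [bracket_apply]

lemma euler_bracket (f g : ℕ → M) :
    euler (bracket br f g) = bracket br (euler f) g + bracket br f (euler g) := by
  ext n
  simp only [euler_apply, bracket_apply, Pi.add_apply, smul_sum, ← sum_add_distrib]
  refine sum_congr rfl fun p hp ↦ ?_
  rw [map_nsmul, LinearMap.smul_apply, map_nsmul, ← add_smul, mem_antidiagonal.mp hp]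

lemma bracket_mulT_left (f g : ℕ → M) : bracket br (mulT f) g = mulT (bracket br f g) := by
  ext n
  cases n with
  | zero => simp
  | succ n => simp [bracket_apply, Nat.sum_antidiagonal_succ]

lemma bracket_mulT_right (f g : ℕ → M) : bracket br f (mulT g) = mulT (bracket br f g) := by
  ext n
  cases n with
  | zero => simp
  | succ n => simp [bracket_apply, Nat.sum_antidiagonal_succ']

lemma bracket_skew (hskew : GradedSkew deg br) {i j : ℤ} {f g : ℕ → M}
    (hf : ∀ n, f n ∈ deg i) (hg : ∀ n, g n ∈ deg j) :
    bracket br f g = -(ksign (i * j) • bracket br g f) := by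
  ext n
  simp only [bracket_apply, Pi.neg_apply, Pi.smul_apply, smul_sum, ← sum_neg_distrib]
  rw [← Nat.sum_antidiagonal_swap]
  exact sum_congr rfl fun p _ ↦ hskew i j _ _ (hf _) (hg _)

lemma bracket_bracket (hjac : GradedJacobi deg br) {i j : ℤ} {f g : ℕ → M}
    (hf : ∀ n, f n ∈ deg i) (hg : ∀ n, g n ∈ deg j) (h : ℕ → M) :
    bracket br (bracket br f g) h =
      bracket br f (bracket br g h) - ksign (i * j) • bracket br g (bracket br f h) := by
  ext n
  simp only [bracket_apply, map_sum, LinearMap.sum_apply, Pi.sub_apply, Pi.smul_apply,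
    smul_sum, hjac i j _ _ _ (hf _) (hg _), sum_sub_distrib]
  congr 1
  · exact sum_antidiagonal_sum_antidiagonal_assoc (fun a b c ↦ br (f a) (br (g b) (h c))) n
  · rw [← sum_antidiagonal_sum_antidiagonal_assoc
      (fun a b c ↦ ksign (i * j) • br (g a) (br (f b) (h c))) n]
    refine sum_congr rfl fun p _ ↦ ?_
    rw [← Nat.sum_antidiagonal_swap]
    rfl

lemma compLeft_bracket {D : M →ₗ[k] M} (hleib : GradedLeibniz deg br D) {i : ℤ} {f : ℕ → M}
    (hf : ∀ n, f n ∈ deg i) (g : ℕ → M) :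
    D.compLeft ℕ (bracket br f g) =
      bracket br (D.compLeft ℕ f) g + ksign i • bracket br f (D.compLeft ℕ g) := by
  ext n
  simp only [LinearMap.compLeft_apply, Function.comp_apply, bracket_apply, map_sum,
    Pi.add_apply, Pi.smul_apply, smul_sum, ← sum_add_distrib]
  exact sum_congr rfl fun p _ ↦ hleib i _ _ (hf _)

lemma euler_compLeft {N : Type*} [AddCommGroup N] [Module k N] (D : M →ₗ[k] N) (f : ℕ → M) :
    euler (D.compLeft ℕ f) = D.compLeft ℕ (euler f : ℕ → M) := by
  ext n; simp

lemma mulT_compLeft {N : Type*} [AddCommGroup N] [Module k N] (D : M →ₗ[k] N) (f : ℕ → M) :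
    mulT (D.compLeft ℕ f) = D.compLeft ℕ (mulT f : ℕ → M) := by
  ext n; by_cases hn : n = 0 <;> simp [hn]

lemma euler_smul (c : k) (f : ℕ → M) : euler (c • f) = c • euler f := by
  ext n; exact smul_comm n c (f n)

lemma bracket_apply_eq_zero_of_forall_lt_right {f g : ℕ → M} {n : ℕ} (hf : f 0 = 0)
    (hg : ∀ j < n, g j = 0) : bracket br f g n = 0 := by
  rw [bracket_apply]
  refine sum_eq_zero fun p hp ↦ ?_
  rcases Nat.eq_zero_or_pos p.1 with h | h
  · simp [h, hf]
  · simp [hg p.2 (by rw [HasAntidiagonal.mem_antidiagonal] at hp; omega)]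

lemma bracket_apply_eq_zero_of_forall_lt_left {f g : ℕ → M} {n : ℕ} (hf : ∀ j < n, f j = 0)
    (hg : g 0 = 0) : bracket br f g n = 0 := by
  rw [bracket_apply]
  refine sum_eq_zero fun p hp ↦ ?_
  rcases Nat.eq_zero_or_pos p.2 with h | h
  · simp [h, hg]
  · simp [hf p.1 (by rw [HasAntidiagonal.mem_antidiagonal] at hp; omega)]

variable [IsAddTorsionFree M] {Γ X : ℕ → M}

lemma eq_zero_of_euler_eq_bracket_left (hΓ : Γ 0 = 0) (hX : X 0 = 0)
    (h : euler X = bracket br Γ X) : X = 0 :=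
  eq_zero_of_forall_nsmul_eq_zero hX fun n hlt ↦ by
    rw [← euler_apply, h]
    exact bracket_apply_eq_zero_of_forall_lt_right hΓ hlt

lemma eq_zero_of_euler_eq_neg_bracket_right (hΓ : Γ 0 = 0) (hX : X 0 = 0)
    (h : euler X = -bracket br X Γ) : X = 0 :=
  eq_zero_of_forall_nsmul_eq_zero hX fun n hlt ↦ by
    rw [← euler_apply, h, Pi.neg_apply, bracket_apply_eq_zero_of_forall_lt_left hlt hΓ, neg_zero]

end Bracket

section MasterEquations

variable {k M : Type*} [Field k] [AddCommGroup M] [Module k M]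
  {deg : ℤ → Submodule k M} {br : M →ₗ[k] M →ₗ[k] M} {D : M →ₗ[k] M} {μ Γ Λ : ℕ → M}

def covDeriv (br : M →ₗ[k] M →ₗ[k] M) (D : M →ₗ[k] M) (μ : ℕ → M) : (ℕ → M) →ₗ[k] ℕ → M :=
  D.compLeft ℕ + bracket br μ

def curvature (br : M →ₗ[k] M →ₗ[k] M) (D : M →ₗ[k] M) (μ : ℕ → M) : ℕ → M :=
  D.compLeft ℕ μ + (2 : k)⁻¹ • bracket br μ μ

lemma covDeriv_apply (f : ℕ → M) : covDeriv br D μ f = D.compLeft ℕ f + bracket br μ f := rfl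

theorem euler_bracket_self (hjac : GradedJacobi deg br) (hΓ : ∀ n, Γ n ∈ deg 0)
    (hΛ : ∀ n, Λ n ∈ deg 1) (hNΛ : euler Λ = bracket br Γ Λ) :
    euler (bracket br Λ Λ) = bracket br Γ (bracket br Λ Λ) := by
  rw [euler_bracket, hNΛ, bracket_bracket hjac hΓ hΛ]
  simp

theorem euler_covDeriv (hjac : GradedJacobi deg br) (hleib : GradedLeibniz deg br D)
    (hΓ : ∀ n, Γ n ∈ deg 0) (hμ : ∀ n, μ n ∈ deg 1)
    (hNμ : covDeriv br D μ Γ = mulT Λ - euler μ) (hNΛ : euler Λ = bracket br Γ Λ) :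
    euler (covDeriv br D μ Λ) = mulT (bracket br Λ Λ) + bracket br Γ (covDeriv br D μ Λ) := by
  have hNμ' : euler μ = mulT Λ - (D.compLeft ℕ Γ + bracket br μ Γ) := by
    rw [← covDeriv_apply, hNμ, sub_sub_cancel]
  simp only [covDeriv_apply, map_add, euler_compLeft, euler_bracket, hNΛ, hNμ', map_sub,
    LinearMap.sub_apply, LinearMap.add_apply, compLeft_bracket hleib hΓ,
    bracket_bracket hjac hμ hΓ, bracket_mulT_left, mul_zero, ksign_zero, one_smul]
  abel

theorem euler_curvature [NeZero (2 : k)] (hskew : GradedSkew deg br) (hjac : GradedJacobi deg br)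
    (hleib : GradedLeibniz deg br D) (hD2 : ∀ x, D (D x) = 0) (hμ : ∀ n, μ n ∈ deg 1)
    (hNμ : covDeriv br D μ Γ = mulT Λ - euler μ) :
    euler (curvature br D μ) = mulT (covDeriv br D μ Λ) - bracket br (curvature br D μ) Γ := by
  have hNμ' : euler μ = mulT Λ - (D.compLeft ℕ Γ + bracket br μ Γ) := by
    rw [← covDeriv_apply, hNμ, sub_sub_cancel]
  have hsymm : (2 : k)⁻¹ • (bracket br (euler μ) μ + bracket br μ (euler μ)) =
      bracket br μ (euler μ) := by
    rw [bracket_skew hskew (f := euler μ) (fun n ↦ Submodule.smul_of_tower_mem _ n (hμ n)) hμ]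
    simp only [mul_one, ksign_one, neg_smul, one_smul, neg_neg]
    rw [← two_smul k, inv_smul_smul₀ two_ne_zero]
  have hjacobi : (2 : k)⁻¹ • bracket br (bracket br μ μ) Γ = bracket br μ (bracket br μ Γ) := by
    rw [bracket_bracket hjac hμ hμ]
    simp only [mul_one, ksign_one, neg_smul, one_smul, sub_neg_eq_add]
    rw [← two_smul k, inv_smul_smul₀ two_ne_zero]
  have hDD : D.compLeft ℕ (D.compLeft ℕ Γ) = 0 := by ext n; simp [hD2]
  unfold curvature
  rw [map_add, euler_smul, euler_compLeft, euler_bracket, hsymm]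
  simp only [covDeriv_apply, hNμ', map_add, map_sub, map_smul, LinearMap.add_apply,
    LinearMap.smul_apply, hDD, compLeft_bracket hleib hμ, bracket_mulT_right, mulT_compLeft,
    hjacobi, ksign_one]
  module

end MasterEquations

end SeriesDGLA

open SeriesDGLA

theorem master_equations_imply_MC_general {k M : Type} [Field k] [CharZero k]
    [AddCommGroup M] [Module k M]
    (deg : ℤ → Submodule k M)
    (br : M →ₗ[k] M →ₗ[k] M) (D : M →ₗ[k] M)
    (hskew : ∀ (i j : ℤ) (x y : M), x ∈ deg i → y ∈ deg j →
      br x y = -(ksign (i * j) • br y x))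
    (hjac : ∀ (i j : ℤ) (x y z : M), x ∈ deg i → y ∈ deg j →
      br (br x y) z = br x (br y z) - ksign (i * j) • br y (br x z))
    (hD2 : ∀ x, D (D x) = 0)
    (hleib : ∀ (i : ℤ) (x y : M), x ∈ deg i →
      D (br x y) = br (D x) y + ksign i • br x (D y))
    (μ Γ Λ : ℕ → M) (lam : M)
    (hΓdeg : ∀ n, Γ n ∈ deg 0) (hΛdeg : ∀ n, Λ n ∈ deg 1) (hμdeg : ∀ n, μ n ∈ deg 1)
    (hΓ0 : Γ 0 = 0) (hμ0 : μ 0 = 0) (hΛ0 : Λ 0 = lam)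
    (hME1 : ∀ n : ℕ, D (Γ n) + ∑ i ∈ Finset.range (n + 1), br (μ i) (Γ (n - i))
        = (if n = 0 then 0 else Λ (n - 1)) - (n : ℤ) • μ n)
    (hME2 : ∀ n : ℕ, (n : ℤ) • Λ n = ∑ i ∈ Finset.range (n + 1), br (Γ i) (Λ (n - i)))
    (hlam_closed : D lam = 0) (hlam_sq : br lam lam = 0) :
    ∀ n : ℕ, D (μ n) + (2 : k)⁻¹ • ∑ i ∈ Finset.range (n + 1), br (μ i) (μ (n - i)) = 0 := by
  have : IsAddTorsionFree M := .of_isTorsionFree k M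
  have hNμ : covDeriv br D μ Γ = mulT Λ - euler μ := by
    ext n; simpa [covDeriv_apply, bracket_apply_eq_sum_range] using hME1 n
  have hNΛ : euler Λ = bracket br Γ Λ := by
    ext n; simpa [bracket_apply_eq_sum_range] using hME2 n
  have hS : bracket br Λ Λ = 0 :=
    eq_zero_of_euler_eq_bracket_left hΓ0 (by simp [hΛ0, hlam_sq])
      (euler_bracket_self hjac hΓdeg hΛdeg hNΛ)
  have hT : covDeriv br D μ Λ = 0 :=
    eq_zero_of_euler_eq_bracket_left hΓ0 (by simp [covDeriv_apply, hΛ0, hlam_closed, hμ0])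
      (by simpa [hS] using euler_covDeriv hjac hleib hΓdeg hμdeg hNμ hNΛ)
  have hR : curvature br D μ = 0 :=
    eq_zero_of_euler_eq_neg_bracket_right hΓ0 (by simp [curvature, hμ0])
      (by simpa [hT] using euler_curvature hskew hjac hleib hD2 hμdeg hNμ)
  intro n
  simpa [curvature, bracket_apply_eq_sum_range] using congrFun hR n

/-- Let `(L, ∂, [−,−])` be a DGLA over `k[[t]]` (encoded here as formal
power series `ℕ → M` with coefficients in a graded Lie algebra `M` over a field `k` of
characteristic zero, with Cauchy-product bracket and coefficientwise differential `D`).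
Suppose the degree-0 element `Γ ∈ tL`, the degree-1 elements `Λ` and `μ` (with
`μ(0) = 0`, `Λ(0) = λ`) satisfy the master equations
`∂_μ Γ = tΛ − Nμ` and `NΛ = [Γ,Λ]`, where `∂_μ = ∂ + [μ,−]` and `N = t d/dt`.
If `∂λ = 0` and `[λ,λ] = 0`, then `μ` satisfies the Maurer--Cartan equation
`∂μ + ½[μ,μ] = 0`. -/
theorem master_equations_imply_MC {k M : Type} [Field k] [CharZero k]
    [AddCommGroup M] [Module k M]
    (deg : ℤ → Submodule k M) (hinternal : DirectSum.IsInternal deg)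
    (br : M →ₗ[k] M →ₗ[k] M) (D : M →ₗ[k] M)
    (hbrdeg : ∀ (i j : ℤ) (x y : M), x ∈ deg i → y ∈ deg j → br x y ∈ deg (i + j))
    (hskew : ∀ (i j : ℤ) (x y : M), x ∈ deg i → y ∈ deg j →
      br x y = -(ksign (i * j) • br y x))
    (hjac : ∀ (i j : ℤ) (x y z : M), x ∈ deg i → y ∈ deg j →
      br (br x y) z = br x (br y z) - ksign (i * j) • br y (br x z))
    (hDdeg : ∀ (i : ℤ) (x : M), x ∈ deg i → D x ∈ deg (i + 1))
    (hD2 : ∀ x, D (D x) = 0)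
    (hleib : ∀ (i : ℤ) (x y : M), x ∈ deg i →
      D (br x y) = br (D x) y + ksign i • br x (D y))
    (μ Γ Λ : ℕ → M) (lam : M)
    (hΓdeg : ∀ n, Γ n ∈ deg 0) (hΛdeg : ∀ n, Λ n ∈ deg 1) (hμdeg : ∀ n, μ n ∈ deg 1)
    (hlamdeg : lam ∈ deg 1)
    (hΓ0 : Γ 0 = 0) (hμ0 : μ 0 = 0) (hΛ0 : Λ 0 = lam)
    (hME1 : ∀ n : ℕ, D (Γ n) + ∑ i ∈ Finset.range (n + 1), br (μ i) (Γ (n - i))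
        = (if n = 0 then 0 else Λ (n - 1)) - (n : ℤ) • μ n)
    (hME2 : ∀ n : ℕ, (n : ℤ) • Λ n = ∑ i ∈ Finset.range (n + 1), br (Γ i) (Λ (n - i)))
    (hlam_closed : D lam = 0) (hlam_sq : br lam lam = 0) :
    ∀ n : ℕ, D (μ n) + (2 : k)⁻¹ • ∑ i ∈ Finset.range (n + 1), br (μ i) (μ (n - i)) = 0 :=
  master_equations_imply_MC_general deg br D hskew hjac hD2 hleib μ Γ Λ lam hΓdeg hΛdeg hμdeg hΓ0
    hμ0 hΛ0 hME1 hME2 hlam_closed hlam_sq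
end

section
/- (Basic Perturbation Lemma) Given SDR data (p, i, h) between complexes (V,d_V) and (W,d_W) with pi = 1_W, d_V h + h d_V = ip − 1_V, hi = 0, ph = 0, h² = 0, and a perturbation δ with (d_V+δ)² = 0 such that 1 − δh is invertible, the maps p' = p + p(1−δh)^{-1}δh, i' = i + h(1−δh)^{-1}δi, h' = h + h(1−δh)^{-1}δh, d'_W = d_W + p(1−δh)^{-1}δi define new SDR data: (d'_W)² = 0, p'i' = 1_W, (d_V+δ)h' + h'(d_V+δ) = i'p' − 1_V, p' and i' are chain maps, and h'i' = 0, p'h' = 0, (h')² = 0. -/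
/-!
Write `Σ = (1 - δh)⁻¹δ`, so that `p' = p(1 + Σh)`, `i' = (1 + hΣ)i`, `h' = h(1 + Σh)` and
`d'_W = d_W + pΣi`. Everything rests on the Maurer–Cartan identity `dΣ + Σd + Σ(ip)Σ = 0`:
multiplying its left side by the invertible elements `1 - δh` on the left and `1 - hδ` on the
right gives `dδ + δd + δ² = (d + δ)² - d² = 0`, using `dh + hd = ip - 1`. It yields the
intertwining relations `(d + Σip)(1 + Σh) = (1 + Σh)(d + δ)` and
`(d + δ)(1 + hΣ) = (1 + hΣ)(d + ipΣ)`, which make `p'` and `i'` chain maps and together give the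
new homotopy relation; `d'_W² = p(dΣ + Σd + ΣipΣ)i = 0`, and the side conditions follow from
`h² = hi = ph = 0`.
-/

section PerturbationIdentities

variable {R : Type*} [Ring R] {d h δ a π : R}

theorem one_sub_mul_mul_of_mul_eq_one (ha : (1 - δ * h) * a = 1) :
    (1 - δ * h) * (a * δ) = δ := by
  rw [← mul_assoc, ha, one_mul]

theorem mul_one_sub_mul_of_mul_eq_one (ha : a * (1 - δ * h) = 1) :
    a * δ * (1 - h * δ) = δ :=
  calc a * δ * (1 - h * δ) = a * (1 - δ * h) * δ := by noncomm_ring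
    _ = δ := by rw [ha, one_mul]

theorem eq_zero_of_mul_mul_eq_zero {u u' v v' x : R} (hu : u' * u = 1) (hv : v * v' = 1)
    (h : u * x * v = 0) : x = 0 :=
  calc x = u' * u * x * (v * v') := by rw [hu, hv, one_mul, mul_one]
    _ = u' * (u * x * v) * v' := by noncomm_ring
    _ = 0 := by rw [h, mul_zero, zero_mul]

theorem perturbation_maurer_cartan (hd : d * d = 0) (hD : (d + δ) * (d + δ) = 0)
    (hhom : d * h + h * d = π - 1) (ha₁ : (1 - δ * h) * a = 1) (ha₂ : a * (1 - δ * h) = 1) :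
    d * (a * δ) + a * δ * d + a * δ * π * (a * δ) = 0 := by
  have hright : (1 - h * δ) * (1 + h * a * δ) = 1 :=
    calc (1 - h * δ) * (1 + h * a * δ) = 1 + h * ((1 - δ * h) * a - 1) * δ := by noncomm_ring
      _ = 1 := by rw [ha₁]; simp
  refine eq_zero_of_mul_mul_eq_zero ha₂ hright ?_
  calc (1 - δ * h) * (d * (a * δ) + a * δ * d + a * δ * π * (a * δ)) * (1 - h * δ)
      = (1 - δ * h) * d * (a * δ * (1 - h * δ)) + (1 - δ * h) * (a * δ) * d * (1 - h * δ)
        + (1 - δ * h) * (a * δ) * π * (a * δ * (1 - h * δ)) := by noncomm_ring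
    _ = (d + δ) * (d + δ) - d * d + δ * (π - 1 - (d * h + h * d)) * δ := by
      rw [one_sub_mul_mul_of_mul_eq_one ha₁, mul_one_sub_mul_of_mul_eq_one ha₂]; noncomm_ring
    _ = 0 := by rw [hd, hD, hhom]; simp

variable (hd : d * d = 0) (hD : (d + δ) * (d + δ) = 0) (hhom : d * h + h * d = π - 1)
  (ha₁ : (1 - δ * h) * a = 1) (ha₂ : a * (1 - δ * h) = 1)
include hd hD hhom ha₁ ha₂

theorem perturbation_intertwines_right :
    (d + a * δ * π) * (1 + a * δ * h) = (1 + a * δ * h) * (d + δ) := by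
  rw [← sub_eq_zero]
  calc (d + a * δ * π) * (1 + a * δ * h) - (1 + a * δ * h) * (d + δ)
      = (d * (a * δ) + a * δ * d + a * δ * π * (a * δ)) * h
        + a * δ * (π - 1 - (d * h + h * d)) + (a * δ * (1 - h * δ) - δ) := by noncomm_ring
    _ = 0 := by
      rw [perturbation_maurer_cartan hd hD hhom ha₁ ha₂, hhom, mul_one_sub_mul_of_mul_eq_one ha₂]
      simp

theorem perturbation_intertwines_left :
    (d + δ) * (1 + h * a * δ) = (1 + h * a * δ) * (d + π * (a * δ)) := by
  rw [← sub_eq_zero]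
  calc (d + δ) * (1 + h * a * δ) - (1 + h * a * δ) * (d + π * (a * δ))
      = -(h * (d * (a * δ) + a * δ * d + a * δ * π * (a * δ)))
        + (d * h + h * d - (π - 1)) * (a * δ) - ((1 - δ * h) * (a * δ) - δ) := by noncomm_ring
    _ = 0 := by
      rw [perturbation_maurer_cartan hd hD hhom ha₁ ha₂, hhom, one_sub_mul_mul_of_mul_eq_one ha₁]
      simp

theorem perturbation_homotopy :
    (d + δ) * (h + h * a * δ * h) + (h + h * a * δ * h) * (d + δ)
      = (1 + h * a * δ) * π * (1 + a * δ * h) - 1 :=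
  calc (d + δ) * (h + h * a * δ * h) + (h + h * a * δ * h) * (d + δ)
      = (d + δ) * (1 + h * a * δ) * h + h * ((1 + a * δ * h) * (d + δ)) := by noncomm_ring
    _ = (1 + h * a * δ) * (d + π * (a * δ)) * h + h * ((d + a * δ * π) * (1 + a * δ * h)) := by
      rw [perturbation_intertwines_left hd hD hhom ha₁ ha₂,
        perturbation_intertwines_right hd hD hhom ha₁ ha₂]
    _ = (1 + h * a * δ) * π * (1 + a * δ * h) - 1
        + h * (d * (a * δ) + a * δ * d + a * δ * π * (a * δ)) * h
        + (d * h + h * d - (π - 1)) := by noncomm_ring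
    _ = (1 + h * a * δ) * π * (1 + a * δ * h) - 1 := by
      rw [perturbation_maurer_cartan hd hD hhom ha₁ ha₂, hhom]; simp

end PerturbationIdentities

theorem perturbed_homotopy_sq {R : Type*} [Ring R] {h a δ : R} (hh : h * h = 0) :
    (h + h * a * δ * h) * (h + h * a * δ * h) = 0 :=
  calc (h + h * a * δ * h) * (h + h * a * δ * h)
      = (1 + h * a * δ) * (h * h) * (1 + a * δ * h) := by noncomm_ring
    _ = 0 := by rw [hh]; simp

section TransferredDifferential

variable {R V W : Type*} [Semiring R] [AddCommMonoid V] [Module R V] [AddCommMonoid W]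
  [Module R W] {dV : Module.End R V} {dW : Module.End R W} {p : V →ₗ[R] W} {i : W →ₗ[R] V}

theorem LinearMap.add_comp_comp_comp_right (hp : dW ∘ₗ p = p ∘ₗ dV) (X : Module.End R V) :
    (dW + p ∘ₗ (X ∘ₗ i)) ∘ₗ p = p ∘ₗ (dV + X * (i ∘ₗ p)) := by
  rw [LinearMap.add_comp, hp, LinearMap.comp_add]
  rfl

theorem LinearMap.comp_add_comp_comp_left (hi : dV ∘ₗ i = i ∘ₗ dW) (X : Module.End R V) :
    i ∘ₗ (dW + p ∘ₗ (X ∘ₗ i)) = (dV + (i ∘ₗ p) * X) ∘ₗ i := by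
  rw [LinearMap.comp_add, ← hi, LinearMap.add_comp]
  rfl

theorem LinearMap.add_comp_comp_mul_self (hp : dW ∘ₗ p = p ∘ₗ dV) (hi : dV ∘ₗ i = i ∘ₗ dW)
    (X : Module.End R V) :
    (dW + p ∘ₗ (X ∘ₗ i)) * (dW + p ∘ₗ (X ∘ₗ i))
      = dW * dW + p ∘ₗ ((dV * X + X * dV + X * (i ∘ₗ p) * X) ∘ₗ i) := by
  ext w
  have hp' := LinearMap.congr_fun hp
  have hi' := LinearMap.congr_fun hi
  simp only [LinearMap.coe_comp, Function.comp_apply] at hp' hi'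
  simp [hp', ← hi', add_assoc]

end TransferredDifferential

/-- **Basic Perturbation Lemma.** Given SDR data `(p, i, h)` between
complexes `(V, d_V)` and `(W, d_W)` with `p i = 1_W`, `d_V h + h d_V = i p − 1_V`,
`h i = 0`, `p h = 0`, `h² = 0`, and a perturbation `δ` with `(d_V + δ)² = 0` such that
`1 − δh` is invertible (with inverse `A`), the maps
`p' = p + p A δ h`, `i' = i + h A δ i`, `h' = h + h A δ h`, `d'_W = d_W + p A δ i`
define new SDR data. -/
theorem basic_perturbation_lemma {k V W : Type} [Field k]
    [AddCommGroup V] [Module k V] [AddCommGroup W] [Module k W]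
    (dV : Module.End k V) (dW : Module.End k W)
    (p : V →ₗ[k] W) (i : W →ₗ[k] V) (h : Module.End k V) (δ : Module.End k V)
    (hdV : dV * dV = 0) (hdW : dW * dW = 0)
    (hpchain : dW ∘ₗ p = p ∘ₗ dV) (hichain : dV ∘ₗ i = i ∘ₗ dW)
    (hpi : p ∘ₗ i = LinearMap.id)
    (hhomotopy : dV * h + h * dV = (i ∘ₗ p : Module.End k V) - 1)
    (hhi : h ∘ₗ i = 0) (hph : p ∘ₗ h = 0) (hh2 : h * h = 0)
    (hpert : (dV + δ) * (dV + δ) = 0)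
    (A : Module.End k V) (hA1 : (1 - δ * h) * A = 1) (hA2 : A * (1 - δ * h) = 1) :
    letI p' : V →ₗ[k] W := p + p ∘ₗ (A * δ * h)
    letI i' : W →ₗ[k] V := i + (h * A * δ) ∘ₗ i
    letI h' : Module.End k V := h + h * A * δ * h
    letI dW' : Module.End k W := dW + p ∘ₗ ((A * δ) ∘ₗ i)
    dW' * dW' = 0
    ∧ p' ∘ₗ i' = LinearMap.id
    ∧ (dV + δ) * h' + h' * (dV + δ) = (i' ∘ₗ p' : Module.End k V) - 1
    ∧ dW' ∘ₗ p' = p' ∘ₗ (dV + δ)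
    ∧ (dV + δ) ∘ₗ i' = i' ∘ₗ dW'
    ∧ h' ∘ₗ i' = 0 ∧ p' ∘ₗ h' = 0 ∧ h' * h' = 0 := by
  have hp' : p + p ∘ₗ (A * δ * h) = p ∘ₗ (1 + A * δ * h) := by
    rw [LinearMap.comp_add, Module.End.one_eq_id, LinearMap.comp_id]
  have hi' : i + (h * A * δ) ∘ₗ i = (1 + h * A * δ) ∘ₗ i := by
    rw [LinearMap.add_comp, Module.End.one_eq_id, LinearMap.id_comp]
  have hpi' w : p (i w) = w := LinearMap.congr_fun hpi w
  have hhi' w : h (i w) = 0 := LinearMap.congr_fun hhi w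
  have hph' v : p (h v) = 0 := LinearMap.congr_fun hph v
  have hh2' v : h (h v) = 0 := LinearMap.congr_fun hh2 v
  refine ⟨?_, ?_, ?_, ?_, ?_, ?_, ?_, perturbed_homotopy_sq hh2⟩
  · rw [LinearMap.add_comp_comp_mul_self hpchain hichain, hdW,
      perturbation_maurer_cartan hdV hpert hhomotopy hA1 hA2]
    simp
  · ext w; simp [hpi', hhi', hph', hh2']
  · rw [hp', hi', perturbation_homotopy hdV hpert hhomotopy hA1 hA2]
    rfl
  · rw [hp', ← LinearMap.comp_assoc, LinearMap.add_comp_comp_comp_right hpchain,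
      LinearMap.comp_assoc, ← Module.End.mul_eq_comp,
      perturbation_intertwines_right hdV hpert hhomotopy hA1 hA2]
    rfl
  · rw [hi', LinearMap.comp_assoc, LinearMap.comp_add_comp_comp_left hichain,
      ← LinearMap.comp_assoc, ← Module.End.mul_eq_comp,
      perturbation_intertwines_left hdV hpert hhomotopy hA1 hA2]
    rfl
  · ext w; simp [hhi', hh2']
  · ext v; simp [hph', hh2']
end
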